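/- For any integers n, m ≥ 4 there exists an oriented graph G = (V, E) with |V| = n and |E| = m such that η(G) ≥ 2⁻¹⁴ · (min(|V|², |E|) · min(|V|, |E|) + |E|). -/

import Mathlib

/-- An oriented graph: finite nonempty sets of vertices and edges with
origin and tail maps. -/
structure OrientedGraph where
  V : Type
  E : Type
  [fintypeV : Fintype V]
  [fintypeE : Fintype E]
  [nonemptyV : Nonempty V]
  [nonemptyE : Nonempty E]
  o : E → V
  t : E → V

attribute [instance] OrientedGraph.fintypeV OrientedGraph.fintypeE
  OrientedGraph.nonemptyV OrientedGraph.nonemptyE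

namespace OrientedGraph

variable (G : OrientedGraph)

/-- `G.IsPath p u v` : the edge sequence `p` is a path from `u` to `v`
(consecutive edges are composable; paths of length 0 at any vertex are allowed). -/
def IsPath (p : List G.E) (u v : G.V) : Prop :=
  List.Chain' (fun e f => G.t e = G.o f) p ∧
  ((p = [] ∧ u = v) ∨
    ∃ h : p ≠ [], u = G.o (p.head h) ∧ v = G.t (p.getLast h))

/-- The label of an edge sequence: the product of the labels of its edges
(the empty sequence maps to `1`). -/
def labelProd {M : Type} [Monoid M] (l : G.E → M) (s : List G.E) : M :=
  (s.map l).prod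

/-- The diagram `(G, l)` is commutative: any two paths with the same origin and
the same tail have equal labels. -/
def IsCommutative {M : Type} [Monoid M] (l : G.E → M) : Prop :=
  ∀ (u v : G.V) (p₁ p₂ : List G.E),
    G.IsPath p₁ u v → G.IsPath p₂ u v → G.labelProd l p₁ = G.labelProd l p₂

/-- A complete system of relations for `G`: for every monoid `M` and every
labeling `l : E → M`, the diagram `(G, l)` is commutative iff all relations hold. -/
def IsComplete (R : Finset (List G.E × List G.E)) : Prop :=
  ∀ (M : Type) [Monoid M], ∀ l : G.E → M,
    G.IsCommutative l ↔ ∀ r ∈ R, G.labelProd l r.1 = G.labelProd l r.2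

/-- A minimal complete system of relations: no proper subset is complete. -/
def IsMinimalComplete (R : Finset (List G.E × List G.E)) : Prop :=
  G.IsComplete R ∧ ∀ R' : Finset (List G.E × List G.E), R' ⊂ R → ¬ G.IsComplete R'

/-- The commutativity rank `η(G)`: the minimal cardinality of a complete
system of relations for `G`. -/
noncomputable def eta : ℕ :=
  sInf {n : ℕ | ∃ R : Finset (List G.E × List G.E), G.IsComplete R ∧ R.card = n}

/-- `S'` is obtained from `S` by one multiplication. -/
def MulStep (S S' : Set (List G.E)) : Prop :=
  ∃ s ∈ S, ∃ s' ∈ S, S' = S ∪ {s ++ s'}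

/-- `G.mCost S S'` : the minimal number of multiplications needed to obtain `S'`
from `S` (`⊤` if impossible). -/
noncomputable def mCost (S S' : Set (List G.E)) : ℕ∞ :=
  sInf {k : ℕ∞ | ∃ n : ℕ, k = n ∧ ∃ f : ℕ → Set (List G.E),
    f 0 = S ∧ f n = S' ∧ ∀ i < n, G.MulStep (f i) (f (i + 1))}

/-- `S_R`: the set of all edge sequences appearing in the relations of `R`. -/
def relSet (R : Finset (List G.E × List G.E)) : Set (List G.E) :=
  {s | ∃ r ∈ R, s = r.1 ∨ s = r.2}

/-- `ℰ`: the empty sequence together with all one-edge sequences. -/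
def baseSet : Set (List G.E) :=
  {s | s = [] ∨ ∃ e : G.E, s = [e]}

/-- `m(R)`: the minimal number of multiplications needed to build all sequences
appearing in `R`, starting from `ℰ`. -/
noncomputable def mRel (R : Finset (List G.E × List G.E)) : ℕ∞ :=
  sInf {k : ℕ∞ | ∃ S : Set (List G.E), G.relSet R ⊆ S ∧ k = G.mCost G.baseSet S}

/-- The multiplication rank `ν(G)`. -/
noncomputable def nu : ℕ∞ :=
  sInf {k : ℕ∞ | ∃ R : Finset (List G.E × List G.E), G.IsComplete R ∧ k = G.mRel R}

/-- A 4-tuple of edges `(a, b, c, d)` forms a rhomboid. -/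
def IsRhomboid (r : G.E × G.E × G.E × G.E) : Prop :=
  G.o r.1 = G.o r.2.2.1 ∧ G.t r.2.1 = G.t r.2.2.2 ∧
  G.t r.1 = G.o r.2.1 ∧ G.t r.2.2.1 = G.o r.2.2.2 ∧
  G.o r.1 ≠ G.t r.1 ∧ G.o r.1 ≠ G.o r.2.2.2 ∧ G.o r.1 ≠ G.t r.2.2.2 ∧
  G.t r.1 ≠ G.o r.2.2.2 ∧ G.t r.1 ≠ G.t r.2.2.2 ∧ G.o r.2.2.2 ≠ G.t r.2.2.2

/-- Two rhomboids `(a, b, c, d)` and `(a', b', c', d')` are disjoint. -/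
def RhDisjoint (r r' : G.E × G.E × G.E × G.E) : Prop :=
  (r.1 ≠ r'.1 ∨ r.2.1 ≠ r'.2.1) ∧
  (r.1 ≠ r'.2.2.1 ∨ r.2.1 ≠ r'.2.2.2) ∧
  (r.2.2.1 ≠ r'.2.2.1 ∨ r.2.2.2 ≠ r'.2.2.2) ∧
  (r.2.2.1 ≠ r'.1 ∨ r.2.2.2 ≠ r'.2.1)

/-- `𝔯𝔥(G)`: the maximal cardinality of a family of pairwise disjoint rhomboids in `G`. -/
noncomputable def rhNum : ℕ :=
  sSup {n : ℕ | ∃ F : Finset (G.E × G.E × G.E × G.E),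
    (∀ r ∈ F, G.IsRhomboid r) ∧
    (∀ r ∈ F, ∀ r' ∈ F, r ≠ r' → G.RhDisjoint r r') ∧ F.card = n}

/-- `𝔏(G)`: the number of loops of `G`. -/
noncomputable def loopCount : ℕ :=
  Nat.card {e : G.E // G.o e = G.t e}

/-- `G` is quasi-acyclic: no directed cycle visiting two or more distinct vertices. -/
def QuasiAcyclic : Prop :=
  ∀ u v : G.V, u ≠ v →
    ∀ p q : List G.E, G.IsPath p u v → G.IsPath q v u → False

/-- `G` is 2-path-bounded: every oriented path avoiding loop edges has length at most 2. -/
def TwoPathBounded : Prop :=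
  ∀ (p : List G.E) (u v : G.V), G.IsPath p u v →
    (∀ e ∈ p, G.o e ≠ G.t e) → p.length ≤ 2

/-- `G` has a pair of multiple edges. -/
def HasMultipleEdges : Prop :=
  ∃ e e' : G.E, e ≠ e' ∧ G.t e = G.t e' ∧ G.o e = G.o e' ∧ G.t e ≠ G.o e

/-- `G` has a triangle. -/
def HasTriangle : Prop :=
  ∃ a b c : G.E, G.o a = G.o b ∧ G.t b = G.o c ∧ G.t c = G.t a ∧
    G.o a ≠ G.t a ∧ G.o b ≠ G.t b ∧ G.o c ≠ G.t c

/-- `G` has no loops. -/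
def NoLoops : Prop := ∀ e : G.E, G.o e ≠ G.t e

/-- Every edge occurring on either side of the relation `r` is a loop. -/
def AllLoops (r : List G.E × List G.E) : Prop :=
  (∀ e ∈ r.1, G.o e = G.t e) ∧ (∀ e ∈ r.2, G.o e = G.t e)

/-- Both sides of the relation `r` contain at least one non-loop edge. -/
def BothSidesNonLoop (r : List G.E × List G.E) : Prop :=
  (∃ e ∈ r.1, G.o e ≠ G.t e) ∧ (∃ e ∈ r.2, G.o e ≠ G.t e)

end OrientedGraph

/-- The triploid `T(n₁, n₂, n₃, n₀, e)`. -/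
def Triploid (n₁ n₂ n₃ n₀ e : ℕ) (hn₁ : 0 < n₁) (he : n₂ * (n₁ + n₃) ≤ e)
    (he₀ : 0 < e) : OrientedGraph where
  V := Fin n₀ ⊕ Fin n₁ ⊕ Fin n₂ ⊕ Fin n₃
  E := (Fin n₁ × Fin n₂) ⊕ (Fin n₂ × Fin n₃) ⊕ Fin (e - n₂ * (n₁ + n₃))
  nonemptyV := ⟨Sum.inr (Sum.inl ⟨0, hn₁⟩)⟩
  nonemptyE := by
    by_cases h : n₂ * (n₁ + n₃) < e
    · exact ⟨Sum.inr (Sum.inr ⟨0, by omega⟩)⟩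
    · have h2 : 0 < n₂ := by
        rcases Nat.eq_zero_or_pos n₂ with h0 | h0
        · exfalso; subst h0; simp at h; omega
        · exact h0
      exact ⟨Sum.inl (⟨0, hn₁⟩, ⟨0, h2⟩)⟩
  o := Sum.elim (fun p => Sum.inr (Sum.inl p.1))
        (Sum.elim (fun p => Sum.inr (Sum.inr (Sum.inl p.1)))
          (fun _ => Sum.inr (Sum.inl ⟨0, hn₁⟩)))
  t := Sum.elim (fun p => Sum.inr (Sum.inr (Sum.inl p.2)))
        (Sum.elim (fun p => Sum.inr (Sum.inr (Sum.inr p.2)))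
          (fun _ => Sum.inr (Sum.inl ⟨0, hn₁⟩)))

/-!
A labelling of the triploid `T(t, k, t, n₀, m)` (edges `a i j : Uᵢ → Vⱼ` and `b j k : Vⱼ → W_k`,
and loops at one vertex of `U`) is commutative iff every loop is trivial and `a i j * b j k`
does not depend on `j`.

Given a complete system `R`, label `a i j` and `b j k` in a monoid that remembers only the ends
of a word and adds `φ (i, k, j)` for every consecutive pair `a i j, b _ k`, and label each loop
`x` by `ψ x`. A relation that holds at `(φ, ψ) = 0` holds on a hyperplane, so the `(φ, ψ)`
satisfying all of `R` have codimension at most `|R|`. By completeness they give commutative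
labellings, which forces `ψ = 0` and `φ (i, k, ·)` constant: dimension at most `t²`. Hence
`|R| ≥ t² (k - 1) + #loops`. Take `t = min n m / 4` and `k = min (n - 2t) (m / 2t)`, pad with
isolated vertices and loops to `n` vertices and `m` edges, and compare.
-/

namespace OrientedGraph

variable (G : OrientedGraph)

@[simp]
theorem isPath_nil {u v : G.V} : G.IsPath [] u v ↔ u = v :=
  ⟨fun ⟨_, h⟩ => by simpa using h, fun h => ⟨List.isChain_nil, Or.inl ⟨rfl, h⟩⟩⟩

theorem isPath_cons {e : G.E} {p : List G.E} {u v : G.V} :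
    G.IsPath (e :: p) u v ↔ u = G.o e ∧ G.IsPath p (G.t e) v := by
  show (List.IsChain _ (e :: p) ∧ _) ↔ _ ∧ (List.IsChain _ p ∧ _)
  cases p with
  | nil => simp [eq_comm]
  | cons f q =>
    simp only [List.isChain_cons_cons, reduceCtorEq, false_and, false_or, ne_eq,
      not_false_eq_true, exists_true_left, List.head_cons, List.getLast_cons_cons]
    tauto

@[simp]
theorem labelProd_nil {M : Type} [Monoid M] (l : G.E → M) : G.labelProd l [] = 1 := rfl

@[simp]
theorem labelProd_cons {M : Type} [Monoid M] (l : G.E → M) (e : G.E) (s : List G.E) :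
    G.labelProd l (e :: s) = l e * G.labelProd l s := List.prod_cons

theorem labelProd_map {M N : Type} [Monoid M] [Monoid N] (g : M →* N) (l : G.E → M)
    (s : List G.E) : G.labelProd (fun e => g (l e)) s = g (G.labelProd l s) := by
  simp [labelProd, map_list_prod, List.map_map, Function.comp_def]

variable {G}

theorem IsPath.filter_not_loop [DecidableEq G.V] {p : List G.E} {u v : G.V}
    (hp : G.IsPath p u v) : G.IsPath (p.filter fun e => G.o e ≠ G.t e) u v := by
  induction p generalizing u with
  | nil => simpa using hp
  | cons e p ih =>
    obtain ⟨rfl, hp'⟩ := G.isPath_cons.mp hp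
    by_cases he : G.o e = G.t e
    · rw [List.filter_cons_of_neg (by simpa using he)]
      exact he ▸ ih hp'
    · rw [List.filter_cons_of_pos (by simpa using he)]
      exact G.isPath_cons.mpr ⟨rfl, ih hp'⟩

theorem labelProd_filter_not_loop [DecidableEq G.V] {M : Type} [Monoid M] {l : G.E → M}
    (hl : ∀ e, G.o e = G.t e → l e = 1) (p : List G.E) :
    G.labelProd l (p.filter fun e => G.o e ≠ G.t e) = G.labelProd l p := by
  induction p with
  | nil => rfl
  | cons e p ih =>
    by_cases he : G.o e = G.t e
    · rw [List.filter_cons_of_neg (by simpa using he), ih, labelProd_cons, hl e he, one_mul]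
    · rw [List.filter_cons_of_pos (by simpa using he), labelProd_cons, labelProd_cons, ih]

theorem exists_isComplete_card_eq_eta (h : ∃ R, G.IsComplete R) :
    ∃ R, G.IsComplete R ∧ R.card = G.eta := by
  obtain ⟨R, hR⟩ := h
  exact Nat.sInf_mem (s := {n | ∃ R, G.IsComplete R ∧ R.card = n}) ⟨R.card, R, hR, rfl⟩

end OrientedGraph

theorem Module.finrank_le_card_add_finrank_of_iInf_ker_le {K V ι : Type*} [Field K]
    [AddCommGroup V] [Module K V] [FiniteDimensional K V] [Fintype ι]
    (f : ι → Module.Dual K V) {U : Submodule K V} (hU : ⨅ i, LinearMap.ker (f i) ≤ U) :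
    Module.finrank K V ≤ Fintype.card ι + Module.finrank K U := by
  have hrange := Submodule.finrank_le (LinearMap.range (LinearMap.pi f))
  rw [Module.finrank_fintype_fun_eq_card] at hrange
  have hker := Submodule.finrank_mono (LinearMap.ker_pi f ▸ hU)
  have := (LinearMap.pi f).finrank_range_add_finrank_ker
  omega

theorem OrientedGraph.IsComplete.finrank_le_card_add_finrank {G : OrientedGraph}
    {K Ω : Type*} [Field K] [AddCommGroup Ω] [Module K Ω] [FiniteDimensional K Ω]
    {M : Ω → Type} [∀ φ, Monoid (M φ)] {R : Finset (List G.E × List G.E)}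
    (hR : G.IsComplete R) (l : ∀ φ, G.E → M φ) (h₀ : G.IsCommutative (l 0))
    (hker : ∀ s s', G.labelProd (l 0) s = G.labelProd (l 0) s' →
      ∃ f : Module.Dual K Ω, ∀ φ ∈ LinearMap.ker f, G.labelProd (l φ) s = G.labelProd (l φ) s')
    (U : Submodule K Ω) (hU : ∀ φ, G.IsCommutative (l φ) → φ ∈ U) :
    Module.finrank K Ω ≤ R.card + Module.finrank K U := by
  have hrel : ∀ r : R, ∃ f : Module.Dual K Ω,
      ∀ φ ∈ LinearMap.ker f, G.labelProd (l φ) r.1.1 = G.labelProd (l φ) r.1.2 :=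
    fun r => hker _ _ (((hR _ (l 0)).mp h₀) r.1 r.2)
  choose f hf using hrel
  rw [← Fintype.card_coe R]
  refine Module.finrank_le_card_add_finrank_of_iInf_ker_le f fun φ hφ => hU φ ?_
  exact (hR _ (l φ)).mpr fun r hr => hf ⟨r, hr⟩ φ (Submodule.mem_iInf _ |>.mp hφ _)

/-- Words over letters carrying a "first" datum in `S₁` and a "last" datum in `S₂`, remembered
only by the first datum of their first letter, the last datum of their last letter (`none` for
a word without such letters) and an accumulator adding `κ l f` over every pair of consecutive
letters. -/
@[ext]
structure AdjacencyMonoid (S₁ S₂ A : Type*) (κ : S₂ → S₁ → A) where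
  ends : Option (S₁ × S₂)
  acc : A

namespace AdjacencyMonoid

variable {S₁ S₂ : Type*}

section Monoid

variable {A : Type*} [AddCommMonoid A] {κ : S₂ → S₁ → A}

def joinEnds : Option (S₁ × S₂) → Option (S₁ × S₂) → Option (S₁ × S₂)
  | none, y => y
  | x, none => x
  | some (f, _), some (_, l) => some (f, l)

def crossTerm (κ : S₂ → S₁ → A) : Option (S₁ × S₂) → Option (S₁ × S₂) → A
  | some (_, l), some (f, _) => κ l f
  | _, _ => 0

@[simp] theorem joinEnds_none_left (y : Option (S₁ × S₂)) : joinEnds none y = y := rfl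

@[simp] theorem joinEnds_none_right (x : Option (S₁ × S₂)) : joinEnds x none = x := by
  cases x <;> rfl

@[simp] theorem joinEnds_some (f f' : S₁) (l l' : S₂) :
    joinEnds (some (f, l)) (some (f', l')) = some (f, l') := rfl

@[simp] theorem crossTerm_none_left (y : Option (S₁ × S₂)) : crossTerm κ none y = 0 := rfl

@[simp] theorem crossTerm_none_right (x : Option (S₁ × S₂)) : crossTerm κ x none = 0 := by
  cases x <;> rfl

@[simp] theorem crossTerm_some (f f' : S₁) (l l' : S₂) :
    crossTerm κ (some (f, l)) (some (f', l')) = κ l f' := rfl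

instance : One (AdjacencyMonoid S₁ S₂ A κ) := ⟨⟨none, 0⟩⟩

instance : Mul (AdjacencyMonoid S₁ S₂ A κ) :=
  ⟨fun x y => ⟨joinEnds x.ends y.ends, x.acc + y.acc + crossTerm κ x.ends y.ends⟩⟩

@[simp] theorem one_ends : (1 : AdjacencyMonoid S₁ S₂ A κ).ends = none := rfl

@[simp] theorem one_acc : (1 : AdjacencyMonoid S₁ S₂ A κ).acc = 0 := rfl

@[simp] theorem mul_ends (x y : AdjacencyMonoid S₁ S₂ A κ) :
    (x * y).ends = joinEnds x.ends y.ends := rfl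

@[simp] theorem mul_acc (x y : AdjacencyMonoid S₁ S₂ A κ) :
    (x * y).acc = x.acc + y.acc + crossTerm κ x.ends y.ends := rfl

instance : Monoid (AdjacencyMonoid S₁ S₂ A κ) where
  one_mul x := AdjacencyMonoid.ext (by simp) (by simp)
  mul_one x := AdjacencyMonoid.ext (by simp) (by simp)
  mul_assoc x y z := by
    rcases x with ⟨_ | ⟨f₁, l₁⟩, a⟩ <;> rcases y with ⟨_ | ⟨f₂, l₂⟩, b⟩ <;>
      rcases z with ⟨_ | ⟨f₃, l₃⟩, c⟩ <;> refine AdjacencyMonoid.ext (by simp) ?_ <;>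
      simp only [mul_acc, mul_ends, joinEnds_some, joinEnds_none_left, joinEnds_none_right,
        crossTerm_some, crossTerm_none_left, crossTerm_none_right] <;> abel

end Monoid

variable {K Ω : Type*} [Field K] [AddCommGroup Ω] [Module K Ω] {κ : S₂ → S₁ → Module.Dual K Ω}

def eval (φ : Ω) :
    AdjacencyMonoid S₁ S₂ (Module.Dual K Ω) κ →* AdjacencyMonoid S₁ S₂ K (fun l f => κ l f φ) where
  toFun x := ⟨x.ends, x.acc φ⟩
  map_one' := rfl
  map_mul' x y := by
    rcases x with ⟨_ | ⟨_, _⟩, a⟩ <;> rcases y with ⟨_ | ⟨_, _⟩, b⟩ <;>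
      refine AdjacencyMonoid.ext rfl ?_ <;> simp

@[simp] theorem eval_ends (φ : Ω) (x : AdjacencyMonoid S₁ S₂ (Module.Dual K Ω) κ) :
    (eval φ x).ends = x.ends := rfl

@[simp] theorem eval_acc (φ : Ω) (x : AdjacencyMonoid S₁ S₂ (Module.Dual K Ω) κ) :
    (eval φ x).acc = x.acc φ := rfl

theorem exists_dual_eval_eq {x y : AdjacencyMonoid S₁ S₂ (Module.Dual K Ω) κ}
    (h : eval 0 x = eval 0 y) :
    ∃ f : Module.Dual K Ω, ∀ φ ∈ LinearMap.ker f, eval φ x = eval φ y := by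
  have hends : x.ends = y.ends := by simpa using congrArg AdjacencyMonoid.ends h
  exact ⟨x.acc - y.acc, fun φ hφ => AdjacencyMonoid.ext (by simpa using hends)
    (by simpa [sub_eq_zero] using hφ)⟩

end AdjacencyMonoid

theorem OrientedGraph.exists_dual_labelProd_eval_eq {G : OrientedGraph} {S₁ S₂ K Ω : Type}
    [Field K] [AddCommGroup Ω] [Module K Ω] {κ : S₂ → S₁ → Module.Dual K Ω}
    (u : G.E → AdjacencyMonoid S₁ S₂ (Module.Dual K Ω) κ) {s s' : List G.E}
    (h : G.labelProd (fun x => AdjacencyMonoid.eval (0 : Ω) (u x)) s =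
      G.labelProd (fun x => AdjacencyMonoid.eval (0 : Ω) (u x)) s') :
    ∃ f : Module.Dual K Ω, ∀ φ ∈ LinearMap.ker f,
      G.labelProd (fun x => AdjacencyMonoid.eval φ (u x)) s =
        G.labelProd (fun x => AdjacencyMonoid.eval φ (u x)) s' := by
  simp only [OrientedGraph.labelProd_map] at h ⊢
  exact AdjacencyMonoid.exists_dual_eval_eq h

namespace Triploid

open OrientedGraph

variable {n₁ n₂ n₃ n₀ m : ℕ} {hn₁ : 0 < n₁} {hm : n₂ * (n₁ + n₃) ≤ m} {hm₀ : 0 < m}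

local notation "𝕋" => Triploid n₁ n₂ n₃ n₀ m hn₁ hm hm₀

def vertU (i : Fin n₁) : (𝕋).V := .inr (.inl i)

def vertV (j : Fin n₂) : (𝕋).V := .inr (.inr (.inl j))

def vertW (k : Fin n₃) : (𝕋).V := .inr (.inr (.inr k))

def edgeA (i : Fin n₁) (j : Fin n₂) : (𝕋).E := .inl (i, j)

def edgeB (j : Fin n₂) (k : Fin n₃) : (𝕋).E := .inr (.inl (j, k))

def loop (x : Fin (m - n₂ * (n₁ + n₃))) : (𝕋).E := .inr (.inr x)

theorem edge_cases (x : (𝕋).E) :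
    (∃ i j, x = edgeA i j) ∨ (∃ j k, x = edgeB j k) ∨ ∃ y, x = loop y := by
  rcases x with ⟨i, j⟩ | ⟨j, k⟩ | y
  exacts [.inl ⟨i, j, rfl⟩, .inr (.inl ⟨j, k, rfl⟩), .inr (.inr ⟨y, rfl⟩)]

@[simp] theorem o_edgeA (i : Fin n₁) (j : Fin n₂) : (𝕋).o (edgeA i j) = vertU i := rfl

@[simp] theorem t_edgeA (i : Fin n₁) (j : Fin n₂) : (𝕋).t (edgeA i j) = vertV j := rfl

@[simp] theorem o_edgeB (j : Fin n₂) (k : Fin n₃) : (𝕋).o (edgeB j k) = vertV j := rfl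

@[simp] theorem t_edgeB (j : Fin n₂) (k : Fin n₃) : (𝕋).t (edgeB j k) = vertW k := rfl

@[simp] theorem o_loop (x : Fin (m - n₂ * (n₁ + n₃))) : (𝕋).o (loop x) = vertU ⟨0, hn₁⟩ := rfl

@[simp] theorem t_loop (x : Fin (m - n₂ * (n₁ + n₃))) : (𝕋).t (loop x) = vertU ⟨0, hn₁⟩ := rfl

@[simp] theorem vertV_inj {j j' : Fin n₂} : (vertV j : (𝕋).V) = vertV j' ↔ j = j' :=
  ⟨fun h => Sum.inl.inj (Sum.inr.inj (Sum.inr.inj h)), congrArg _⟩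

@[simp] theorem vertU_ne_vertV (i : Fin n₁) (j : Fin n₂) : (vertU i : (𝕋).V) ≠ vertV j :=
  fun h => nomatch h

@[simp] theorem vertV_ne_vertU (j : Fin n₂) (i : Fin n₁) : (vertV j : (𝕋).V) ≠ vertU i :=
  fun h => nomatch h

@[simp] theorem vertV_ne_vertW (j : Fin n₂) (k : Fin n₃) : (vertV j : (𝕋).V) ≠ vertW k :=
  fun h => nomatch h

@[simp] theorem vertW_ne_vertU (k : Fin n₃) (i : Fin n₁) : (vertW k : (𝕋).V) ≠ vertU i :=
  fun h => nomatch h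

@[simp] theorem vertW_ne_vertV (k : Fin n₃) (j : Fin n₂) : (vertW k : (𝕋).V) ≠ vertV j :=
  fun h => nomatch h

theorem card_V : Fintype.card (𝕋).V = n₀ + n₁ + n₂ + n₃ := by
  change Fintype.card (Fin n₀ ⊕ Fin n₁ ⊕ Fin n₂ ⊕ Fin n₃) = _
  simp only [Fintype.card_sum, Fintype.card_fin]
  ring

theorem card_E : Fintype.card (𝕋).E = m := by
  change Fintype.card ((Fin n₁ × Fin n₂) ⊕ (Fin n₂ × Fin n₃) ⊕ Fin (m - n₂ * (n₁ + n₃))) = _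
  simp only [Fintype.card_sum, Fintype.card_prod, Fintype.card_fin]
  rw [Nat.mul_comm n₁ n₂]
  have := hm
  rw [mul_add] at this ⊢
  omega

theorem isPath_edgeA_edgeB (i : Fin n₁) (j : Fin n₂) (k : Fin n₃) :
    (𝕋).IsPath [edgeA i j, edgeB j k] (vertU i) (vertW k) := by
  simp [isPath_cons]

theorem isPath_loop (x : Fin (m - n₂ * (n₁ + n₃))) :
    (𝕋).IsPath [loop x] (vertU ⟨0, hn₁⟩) (vertU ⟨0, hn₁⟩) := by
  simp [isPath_cons]

section Commutativity

variable {M : Type} [Monoid M]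

def pathValue (l : (𝕋).E → M) (w : Fin n₁ → Fin n₃ → M) : (𝕋).V → (𝕋).V → M
  | .inr (.inl i), .inr (.inr (.inl j)) => l (edgeA i j)
  | .inr (.inr (.inl j)), .inr (.inr (.inr k)) => l (edgeB j k)
  | .inr (.inl i), .inr (.inr (.inr k)) => w i k
  | _, _ => 1

theorem pathValue_self (l : (𝕋).E → M) (w : Fin n₁ → Fin n₃ → M) (u : (𝕋).V) :
    pathValue l w u u = 1 := by
  rcases u with _ | _ | _ | _ <;> rfl

theorem labelProd_eq_pathValue {l : (𝕋).E → M} {w : Fin n₁ → Fin n₃ → M}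
    (hw : ∀ i j k, l (edgeA i j) * l (edgeB j k) = w i k)
    {p : List (𝕋).E} {u v : (𝕋).V} (hp : (𝕋).IsPath p u v)
    (hloop : ∀ x ∈ p, (𝕋).o x ≠ (𝕋).t x) :
    (𝕋).labelProd l p = pathValue l w u v := by
  rcases p with _ | ⟨x₁, p⟩
  · obtain rfl := (isPath_nil _).mp hp
    exact (pathValue_self l w u).symm
  replace hp := (isPath_cons _).mp hp
  obtain ⟨rfl, hp⟩ := hp
  obtain ⟨i, j, rfl⟩ | ⟨j, k, rfl⟩ | ⟨y, rfl⟩ := edge_cases x₁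
  · rcases p with _ | ⟨x₂, p⟩
    · obtain rfl := (isPath_nil _).mp hp
      exact mul_one _
    replace hp := (isPath_cons _).mp hp
    obtain ⟨hj, hp⟩ := hp
    obtain ⟨_, _, rfl⟩ | ⟨j', k, rfl⟩ | ⟨_, rfl⟩ := edge_cases x₂
    · simp at hj
    · obtain rfl : j = j' := by simpa using hj
      rcases p with _ | ⟨x₃, p⟩
      · obtain rfl := (isPath_nil _).mp hp
        exact (congrArg _ (mul_one _)).trans (hw i j k)
      · have := ((isPath_cons _).mp hp).1
        obtain ⟨_, _, rfl⟩ | ⟨_, _, rfl⟩ | ⟨_, rfl⟩ := edge_cases x₃ <;> simp at this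
    · simp at hj
  · rcases p with _ | ⟨x₂, p⟩
    · obtain rfl := (isPath_nil _).mp hp
      exact mul_one _
    · have := ((isPath_cons _).mp hp).1
      obtain ⟨_, _, rfl⟩ | ⟨_, _, rfl⟩ | ⟨_, rfl⟩ := edge_cases x₂ <;> simp at this
  · simp at hloop

theorem isCommutative_of_forall_mul_eq {l : (𝕋).E → M}
    (hloop : ∀ x, l (loop x) = 1) (w : Fin n₁ → Fin n₃ → M)
    (hw : ∀ i j k, l (edgeA i j) * l (edgeB j k) = w i k) :
    (𝕋).IsCommutative l := by
  classical
  have hl : ∀ x, (𝕋).o x = (𝕋).t x → l x = 1 := by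
    intro x hx
    obtain ⟨_, _, rfl⟩ | ⟨_, _, rfl⟩ | ⟨y, rfl⟩ := edge_cases x
    · simp at hx
    · simp at hx
    · exact hloop y
  intro u v p₁ p₂ hp₁ hp₂
  rw [← labelProd_filter_not_loop hl p₁, ← labelProd_filter_not_loop hl p₂,
    labelProd_eq_pathValue hw hp₁.filter_not_loop (by simp),
    labelProd_eq_pathValue hw hp₂.filter_not_loop (by simp)]

end Commutativity

theorem exists_isComplete (hn₂ : 0 < n₂) : ∃ R, (𝕋).IsComplete R := by
  classical
  let j₀ : Fin n₂ := ⟨0, hn₂⟩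
  refine ⟨(Finset.univ.image fun x => ([loop x], [])) ∪
    (Finset.univ.image fun y : Fin n₁ × Fin n₂ × Fin n₃ =>
      ([edgeA y.1 y.2.1, edgeB y.2.1 y.2.2], [edgeA y.1 j₀, edgeB j₀ y.2.2])), fun M _ l => ?_⟩
  simp only [Finset.mem_union, Finset.mem_image, Finset.mem_univ, true_and]
  constructor
  · rintro hl r (⟨x, rfl⟩ | ⟨⟨i, j, k⟩, rfl⟩)
    · exact hl _ _ _ _ (isPath_loop x) ((isPath_nil _).mpr rfl)
    · exact hl _ _ _ _ (isPath_edgeA_edgeB i j k) (isPath_edgeA_edgeB i j₀ k)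
  · intro hrel
    refine isCommutative_of_forall_mul_eq (fun x => ?_) (fun i k => l (edgeA i j₀) * l (edgeB j₀ k))
      fun i j k => ?_
    · simpa using hrel _ (.inl ⟨x, rfl⟩)
    · simpa using hrel _ (.inr ⟨(i, j, k), rfl⟩)

local notation "Ω" => (Fin n₁ × Fin n₃ × Fin n₂ → ℚ) × (Fin (m - n₂ * (n₁ + n₃)) → ℚ)

def cornerForm : (Fin n₁ × Fin n₂) ⊕ Fin n₃ → Fin n₁ ⊕ (Fin n₂ × Fin n₃) → Module.Dual ℚ Ω
  | .inl (i, j), .inr (_, k) => LinearMap.proj (i, k, j) ∘ₗ LinearMap.fst ℚ _ _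
  | _, _ => 0

-- The ends of `a i j * b j k` are `(inl i, inr k)` whatever `j`; its accumulator is `φ (i, k, j)`.
def adjacencyLabel : (𝕋).E → AdjacencyMonoid _ _ (Module.Dual ℚ Ω) cornerForm
  | .inl (i, j) => ⟨some (.inl i, .inl (i, j)), 0⟩
  | .inr (.inl (j, k)) => ⟨some (.inr (j, k), .inr k), 0⟩
  | .inr (.inr x) => ⟨none, LinearMap.proj x ∘ₗ LinearMap.snd ℚ _ _⟩

@[simp] theorem cornerForm_inl_inr (i : Fin n₁) (j j' : Fin n₂) (k : Fin n₃) :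
    cornerForm (m := m) (.inl (i, j)) (.inr (j', k)) =
      LinearMap.proj (i, k, j) ∘ₗ LinearMap.fst ℚ _ _ := rfl

@[simp] theorem adjacencyLabel_edgeA (i : Fin n₁) (j : Fin n₂) :
    adjacencyLabel (edgeA i j : (𝕋).E) = ⟨some (.inl i, .inl (i, j)), 0⟩ := rfl

@[simp] theorem adjacencyLabel_edgeB (j : Fin n₂) (k : Fin n₃) :
    adjacencyLabel (edgeB j k : (𝕋).E) = ⟨some (.inr (j, k), .inr k), 0⟩ := rfl

@[simp] theorem adjacencyLabel_loop (x : Fin (m - n₂ * (n₁ + n₃))) :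
    adjacencyLabel (loop x : (𝕋).E) = ⟨none, LinearMap.proj x ∘ₗ LinearMap.snd ℚ _ _⟩ := rfl

theorem isCommutative_eval_zero :
    (𝕋).IsCommutative fun x => AdjacencyMonoid.eval (0 : Ω) (adjacencyLabel x) :=
  isCommutative_of_forall_mul_eq (fun _ => AdjacencyMonoid.ext rfl (by simp))
    (fun i k => ⟨some (.inl i, .inr k), 0⟩) fun _ _ _ => AdjacencyMonoid.ext rfl (by simp)

theorem fst_eq_and_snd_eq_zero_of_isCommutative_eval {φ : Ω}
    (h : (𝕋).IsCommutative fun x => AdjacencyMonoid.eval φ (adjacencyLabel x)) :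
    (∀ i k j j', φ.1 (i, k, j) = φ.1 (i, k, j')) ∧ φ.2 = 0 := by
  constructor
  · intro i k j j'
    simpa using congrArg AdjacencyMonoid.acc
      (h _ _ _ _ (isPath_edgeA_edgeB i j k) (isPath_edgeA_edgeB i j' k))
  · funext x
    simpa using congrArg AdjacencyMonoid.acc
      (h _ _ _ _ (isPath_loop x) ((isPath_nil _).mpr rfl))

theorem mul_add_le_card_add_of_isComplete (hn₂ : 0 < n₂)
    {R : Finset (List (𝕋).E × List (𝕋).E)} (hR : (𝕋).IsComplete R) :
    n₁ * n₃ * n₂ + (m - n₂ * (n₁ + n₃)) ≤ R.card + n₁ * n₃ := by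
  let ι : (Fin n₁ × Fin n₃ → ℚ) →ₗ[ℚ] Ω := LinearMap.inl ℚ _ _ ∘ₗ
    LinearMap.funLeft ℚ ℚ fun ikj : Fin n₁ × Fin n₃ × Fin n₂ => (ikj.1, ikj.2.1)
  have hU : ∀ φ : Ω, (𝕋).IsCommutative (fun x => AdjacencyMonoid.eval φ (adjacencyLabel x)) →
      φ ∈ LinearMap.range ι := by
    intro φ hφ
    obtain ⟨hφ₁, hφ₂⟩ := fst_eq_and_snd_eq_zero_of_isCommutative_eval hφ
    exact ⟨fun ik => φ.1 (ik.1, ik.2, ⟨0, hn₂⟩),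
      Prod.ext (funext fun _ => hφ₁ _ _ _ _) hφ₂.symm⟩
  have key := hR.finrank_le_card_add_finrank (K := ℚ) _ isCommutative_eval_zero
    (fun _ _ => exists_dual_labelProd_eval_eq adjacencyLabel) _ hU
  have hι := LinearMap.finrank_range_le ι
  simp only [Module.finrank_prod, Module.finrank_fintype_fun_eq_card, Fintype.card_prod,
    Fintype.card_fin] at key hι
  linarith

theorem mul_add_le_eta_add (hn₂ : 0 < n₂) :
    n₁ * n₃ * n₂ + (m - n₂ * (n₁ + n₃)) ≤ (𝕋).eta + n₁ * n₃ := by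
  obtain ⟨R, hR, hcard⟩ := exists_isComplete_card_eq_eta (exists_isComplete hn₂)
  exact hcard ▸ mul_add_le_card_add_of_isComplete hn₂ hR

end Triploid

theorem min_sq_mul_min_le {n m t k : ℕ} (ht : 1 ≤ t) (hk₂ : 2 ≤ k) (hμ : 4 * t ≤ min n m)
    (hμ' : min n m ≤ 8 * t) (hn : 2 * t + k ≤ n) (hm : k * (t + t) ≤ m)
    (hk : n ≤ 2 * t + k ∨ m < (k + 1) * (t + t)) :
    min (n ^ 2) m * min n m ≤ 256 * (t * t * k) := by
  rcases hk with hn' | hm'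
  · have hk8 : k ≤ 8 * t := by
      rcases le_total n m with h | h
      · omega
      · have : k * 2 ≤ k * (t + t) := Nat.mul_le_mul_left _ (by omega)
        omega
    calc min (n ^ 2) m * min n m ≤ n ^ 2 * (8 * t) := Nat.mul_le_mul (min_le_left _ _) hμ'
      _ ≤ (2 * k) ^ 2 * (8 * t) := by gcongr; omega
      _ ≤ 256 * (t * t * k) := by nlinarith [Nat.mul_le_mul_right (k * t) hk8]
  · calc min (n ^ 2) m * min n m ≤ m * (8 * t) := Nat.mul_le_mul (min_le_right _ _) hμ'
      _ ≤ 256 * (t * t * k) := by nlinarith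

theorem min_sq_mul_min_add_le {n m t k η : ℕ} (ht : 1 ≤ t) (hk₂ : 2 ≤ k)
    (hμ : 4 * t ≤ min n m) (hμ' : min n m ≤ 8 * t) (hn : 2 * t + k ≤ n) (hm : k * (t + t) ≤ m)
    (hk : n ≤ 2 * t + k ∨ m < (k + 1) * (t + t))
    (hη : t * t * k + (m - k * (t + t)) ≤ η + t * t) :
    min (n ^ 2) m * min n m + m ≤ 2 ^ 14 * η := by
  have hmain := min_sq_mul_min_le ht hk₂ hμ hμ' hn hm hk
  have h₁ : 2 * (t * t) ≤ t * t * k := by nlinarith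
  have h₂ : k * (t + t) ≤ 2 * (t * t * k) := by nlinarith
  omega

/-- Theorem (lower bound on commutativity rank): for any `n, m ≥ 4` there is a graph
with `n` vertices and `m` edges such that
`η(G) ≥ 2⁻¹⁴ · (min(|V|², |E|) · min(|V|, |E|) + |E|)`. -/
theorem eta_lower_bound (n m : ℕ) (hn : 4 ≤ n) (hm : 4 ≤ m) :
    ∃ G : OrientedGraph, Fintype.card G.V = n ∧ Fintype.card G.E = m ∧
      min (Fintype.card G.V ^ 2) (Fintype.card G.E) *
          min (Fintype.card G.V) (Fintype.card G.E) + Fintype.card G.E ≤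
        2 ^ 14 * G.eta := by
  set t := min n m / 4 with ht_def
  set k := min (n - 2 * t) (m / (2 * t)) with hk_def
  have ht : 0 < t := by omega
  have hk₂ : 2 ≤ k := le_min (by omega) ((Nat.le_div_iff_mul_le (by omega)).mpr (by omega))
  have hkm : k * (t + t) ≤ m := by
    rw [← two_mul]
    exact (Nat.le_div_iff_mul_le (by omega)).mp (min_le_right _ _)
  have hk : n ≤ 2 * t + k ∨ m < (k + 1) * (t + t) := by
    rcases min_choice (n - 2 * t) (m / (2 * t)) with h | h
    · omega
    · rw [← hk_def] at h
      rw [← two_mul, h]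
      exact .inr ((Nat.lt_mul_div_succ m (by omega)).trans_eq (mul_comm _ _))
  have hV : Fintype.card (Triploid t k t (n - (2 * t + k)) m ht hkm (by omega)).V = n := by
    rw [Triploid.card_V]
    omega
  refine ⟨_, hV, Triploid.card_E, ?_⟩
  rw [hV, Triploid.card_E]
  exact min_sq_mul_min_add_le ht hk₂ (by omega) (by omega) (by omega) hkm hk
    (Triploid.mul_add_le_eta_add (by omega))
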